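/- arXiv:2302.10844 — 2 statements merged into one kernel-verified Lean document; each statement's English description precedes it below -/
import Mathlib

section
/- There exists an absolute constant C > 0 such that the following holds. Let α, ρ > 0, δ ∈ (0,1), and n ≥ d + log(1/δ). Let η_1, …, η_n be i.i.d. copies of an (α,ρ)-semi-product random vector in ℝ^d, and let f = f_{2ρ} be the gradient of the entry-wise Huber loss with parameter 2ρ. Then with probability at least 1−δ, the operator norm of the matrix (1/n)·Σ_{i=1}^n f(η_i)·f(η_i)^⊤ is at most C·ρ². -/
open MeasureTheory ProbabilityTheory Real
open scoped BigOperators ENNReal NNReal Classical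

noncomputable section

/-- The clipping map `φ_h`: identity on `[-h, h]`, `h · sign t` outside. -/
def clip (h t : ℝ) : ℝ := if |t| ≤ h then t else h * Real.sign t

/-- The Huber penalty `Φ_h`. -/
def huber (h t : ℝ) : ℝ := if |t| ≤ h then t ^ 2 / 2 else h * |t| - h ^ 2 / 2

/-- Entry-wise Huber loss `F_h`. -/
def huberLoss {d : ℕ} (h : ℝ) (x : EuclideanSpace ℝ (Fin d)) : ℝ :=
  ∑ j, huber h (x j)

/-- Gradient of the entry-wise Huber loss: coordinatewise clipping `f_h`. -/
def clipVec {d : ℕ} (h : ℝ) (x : EuclideanSpace ℝ (Fin d)) : EuclideanSpace ℝ (Fin d) :=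
  WithLp.toLp 2 (fun j => clip h (x j))

/-- Euclidean projection onto the ball of radius `h` centered at `0`. -/
def ballProj {d : ℕ} (h : ℝ) (x : EuclideanSpace ℝ (Fin d)) : EuclideanSpace ℝ (Fin d) :=
  if ‖x‖ ≤ h then x else (h / ‖x‖) • x

/-- `y` is an `ε`-corruption of `ystar`: they differ in at most `ε·n` positions. -/
def IsCorruption {E : Type*} {n : ℕ} (ε : ℝ) (ystar y : Fin n → E) : Prop :=
  ({i : Fin n | y i ≠ ystar i}.ncard : ℝ) ≤ ε * n

/-- The weight set `W_ε`. -/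
def weightSet (n : ℕ) (ε : ℝ) : Set (Fin n → ℝ) :=
  {w | (∀ i, 0 ≤ w i ∧ w i ≤ 1 / n) ∧ ∑ i, |w i - 1 / n| ≤ ε}

/-- The weighted loss `L^w(μ) = Σ_i w_i F(μ - y_i)`. -/
def wLoss {d n : ℕ} (F : EuclideanSpace ℝ (Fin d) → ℝ) (y : Fin n → EuclideanSpace ℝ (Fin d))
    (w : Fin n → ℝ) (μ : EuclideanSpace ℝ (Fin d)) : ℝ :=
  ∑ i, w i * F (μ - y i)

/-- An (α,ρ)-semi-product random vector. -/
structure IsSemiProduct {Ω : Type*} [MeasurableSpace Ω] (P : Measure Ω) {d : ℕ} (α ρ : ℝ)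
    (η : Ω → EuclideanSpace ℝ (Fin d)) : Prop where
  meas : Measurable η
  symm : ∀ j : Fin d, IdentDistrib (fun ω => η ω j) (fun ω => -(η ω j)) P P
  mass : ∀ j : Fin d, ENNReal.ofReal α ≤ P {ω | |η ω j| ≤ ρ}
  indep_sign_abs :
    IndepFun (fun ω => fun j : Fin d => Real.sign (η ω j))
      (fun ω => fun j : Fin d => |η ω j|) P
  iIndep_sign :
    iIndepFun (fun j ω => Real.sign (η ω j)) P

/-- i.i.d. copies of an (α,ρ)-semi-product random vector. -/
def IsIIDSemiProduct {Ω : Type*} [MeasurableSpace Ω] (P : Measure Ω) {d n : ℕ} (α ρ : ℝ)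
    (η : Fin n → Ω → EuclideanSpace ℝ (Fin d)) : Prop :=
  iIndepFun η P ∧
    (∀ i, IsSemiProduct P α ρ (η i)) ∧
    ∀ i j, IdentDistrib (η i) (η j) P P

/-- Outer product `x xᵀ` as a matrix. -/
def outerProd {d : ℕ} (x : EuclideanSpace ℝ (Fin d)) : Matrix (Fin d) (Fin d) ℝ :=
  Matrix.of fun i j => x i * x j

/-- Operator (spectral) norm of a matrix, acting on Euclidean space. -/
def matOpNorm {d : ℕ} (M : Matrix (Fin d) (Fin d) ℝ) : ℝ :=
  ‖LinearMap.toContinuousLinearMap (Matrix.toEuclideanLin M)‖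

/-- Frobenius norm of a matrix. -/
def frobNorm {d : ℕ} (M : Matrix (Fin d) (Fin d) ℝ) : ℝ :=
  Real.sqrt (∑ i, ∑ j, (M i j) ^ 2)

/-- Effective rank `r(Σ) = Tr(Σ)/‖Σ‖`. -/
def effRank {d : ℕ} (M : Matrix (Fin d) (Fin d) ℝ) : ℝ :=
  M.trace / matOpNorm M

/-- Quadratic form `vᵀ M v`. -/
def quadForm {d : ℕ} (M : Matrix (Fin d) (Fin d) ℝ) (v : EuclideanSpace ℝ (Fin d)) : ℝ :=
  ∑ i, ∑ j, v i * M i j * v j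

/-- The uniform (rotation-invariant) probability distribution on the unit sphere of `ℝ^d`. -/
def IsUniformOnSphere {d : ℕ} (μ : Measure (EuclideanSpace ℝ (Fin d))) : Prop :=
  IsProbabilityMeasure μ ∧ μ (Metric.sphere (0 : EuclideanSpace ℝ (Fin d)) 1) = 1 ∧
    ∀ O : EuclideanSpace ℝ (Fin d) ≃ₗᵢ[ℝ] EuclideanSpace ℝ (Fin d), μ.map O = μ

/-- `max_{‖v‖=1} (Σ_i w_i ⟨g i, v⟩^{2k})^{1/(2k)}`. -/
def momSup {d n : ℕ} (k : ℕ) (g : Fin n → EuclideanSpace ℝ (Fin d)) (w : Fin n → ℝ) : ℝ :=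
  sSup {x : ℝ | ∃ v : EuclideanSpace ℝ (Fin d), ‖v‖ = 1 ∧
    x = (∑ i, w i * (inner ℝ (g i) v : ℝ) ^ (2 * k)) ^ ((1 : ℝ) / (2 * k))}

/-- The random vector `R · Σ^{1/2} · U`. -/
def ellSample {Ω : Type*} {d : ℕ} (Ssqrt : Matrix (Fin d) (Fin d) ℝ) (R : Ω → ℝ)
    (U : Ω → EuclideanSpace ℝ (Fin d)) : Ω → EuclideanSpace ℝ (Fin d) :=
  fun ω => R ω • Matrix.toEuclideanLin Ssqrt (U ω)

/-! Write `f(η) = sign(η) · min(|η|, 2ρ)` coordinatewise. Conditionally on `|η|`, the signs are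
independent and symmetric, so by Hoeffding's lemma every bilinear form `uᵀ X v` of the `n × d`
matrix `X` with rows `f(η_i)` is sub-Gaussian with variance proxy `(2ρ)²` for unit `u`, `v`.
A union bound over `1/4`-nets of the two unit spheres, of sizes at most `9ⁿ` and `9ᵈ`, shows that
`uᵀ X v < 8ρ√n` on the nets with probability at least `1 - 81ⁿ e^{-8n} ≥ 1 - δ`; then
`‖X‖ ≤ 16ρ√n`, and `‖n⁻¹ XᵀX‖ = ‖X‖² / n ≤ 256 ρ²`. -/

open Metric Module
open scoped RealInnerProductSpace

@[fun_prop]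
lemma Real.measurable_sign : Measurable Real.sign :=
  Measurable.ite (measurableSet_lt measurable_id measurable_const) measurable_const
    (Measurable.ite (measurableSet_lt measurable_const measurable_id) measurable_const
      measurable_const)

lemma clip_eq_sign_mul_min (h t : ℝ) : clip h t = Real.sign t * min |t| h := by
  unfold clip
  rcases le_or_gt |t| h with ht | ht
  · rw [if_pos ht, min_eq_left ht]
    rcases lt_trichotomy t 0 with h0 | rfl | h0
    · rw [Real.sign_of_neg h0, abs_of_neg h0]; ring
    · simp
    · rw [Real.sign_of_pos h0, abs_of_pos h0]; ring
  · rw [if_neg ht.not_ge, min_eq_right ht.le, mul_comm]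

lemma abs_min_abs_le_abs (t h : ℝ) : |min |t| h| ≤ |h| := by
  rcases le_total |t| h with ht | ht
  · rw [min_eq_left ht, abs_abs]; exact ht.trans (le_abs_self h)
  · rw [min_eq_right ht]

lemma abs_clip_le (h t : ℝ) : |clip h t| ≤ |h| := by
  rw [clip_eq_sign_mul_min, abs_mul]
  have hsign : |Real.sign t| ≤ 1 := by
    rcases Real.sign_apply_eq t with h1 | h1 | h1 <;> simp [h1]
  simpa using mul_le_mul hsign (abs_min_abs_le_abs t h) (abs_nonneg _) zero_le_one

lemma measurable_clip (h : ℝ) : Measurable (clip h) := by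
  simp_rw [funext (clip_eq_sign_mul_min h)]
  fun_prop

lemma abs_sum_clip_mul_le {d : ℕ} (h : ℝ) (x t : Fin d → ℝ) :
    |∑ j, clip h (x j) * t j| ≤ ∑ j, |h| * |t j| :=
  (Finset.abs_sum_le_sum_abs _ _).trans <| Finset.sum_le_sum fun j _ => by
    rw [abs_mul]
    exact mul_le_mul_of_nonneg_right (abs_clip_le h _) (abs_nonneg _)

section Nets

variable {E : Type*} [NormedAddCommGroup E] [NormedSpace ℝ E] [FiniteDimensional ℝ E]

/-- Volume packing: the balls of radius `ε / 2` around the points are disjoint and lie in the ball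
of radius `1 + ε / 2`. -/
theorem card_le_of_isSeparated_sphere {ε : ℝ≥0} (hε : 0 < ε) {C : Finset E}
    (hC : (C : Set E) ⊆ sphere 0 1) (hsep : IsSeparated ε (C : Set E)) :
    (C.card : ℝ) ≤ (1 + 2 / ε) ^ finrank ℝ E := by
  rcases subsingleton_or_nontrivial E with hE | hE
  · have : C = ∅ := Finset.eq_empty_of_forall_notMem fun x hx => by
      simpa [Subsingleton.elim x 0] using hC hx
    simp only [this, Finset.card_empty, Nat.cast_zero]
    positivity
  let := borel E
  have : BorelSpace E := ⟨rfl⟩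
  set μ : Measure E := Measure.addHaar
  set r : ℝ := ε / 2
  have hr : 0 < r := by positivity
  have hdisj : (C : Set E).PairwiseDisjoint fun x => ball x r := fun x hx y hy hxy => by
    refine ball_disjoint_ball ?_
    have : (ε : ℝ≥0∞) < edist x y := hsep hx hy hxy
    rw [edist_nndist, ENNReal.coe_lt_coe, ← NNReal.coe_lt_coe, coe_nndist] at this
    linarith [show r + r = ε by simp only [r]; ring]
  have hsub : (⋃ x ∈ C, ball x r) ⊆ ball (0 : E) (1 + r) := by
    simp only [Set.iUnion_subset_iff]
    intro x hx z hz
    rw [mem_ball_zero_iff]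
    have hx1 : ‖x‖ = 1 := mem_sphere_zero_iff_norm.1 (hC hx)
    calc ‖z‖ ≤ ‖z - x‖ + ‖x‖ := norm_le_norm_sub_add z x
      _ < r + 1 := by rw [hx1, ← dist_eq_norm]; linarith [mem_ball.1 hz]
      _ = 1 + r := add_comm _ _
  have hvol : (C.card : ℝ≥0∞) * ENNReal.ofReal (r ^ finrank ℝ E) * μ (ball 0 1) ≤
      ENNReal.ofReal ((1 + r) ^ finrank ℝ E) * μ (ball 0 1) := by
    calc (C.card : ℝ≥0∞) * ENNReal.ofReal (r ^ finrank ℝ E) * μ (ball 0 1)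
        = μ (⋃ x ∈ C, ball x r) := by
          rw [measure_biUnion_finset hdisj fun x _ => measurableSet_ball, mul_assoc,
            Finset.sum_congr rfl fun x _ => μ.addHaar_ball x hr.le, Finset.sum_const,
            nsmul_eq_mul]
      _ ≤ μ (ball 0 (1 + r)) := measure_mono hsub
      _ = ENNReal.ofReal ((1 + r) ^ finrank ℝ E) * μ (ball 0 1) :=
          μ.addHaar_ball 0 (by positivity)
  rw [ENNReal.mul_le_mul_iff_left (measure_ball_pos μ 0 one_pos).ne' measure_ball_lt_top.ne,
    ← ENNReal.ofReal_natCast, ← ENNReal.ofReal_mul (Nat.cast_nonneg _),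
    ENNReal.ofReal_le_ofReal_iff (by positivity)] at hvol
  have hbase : 1 + 2 / (ε : ℝ) = (1 + r) / r := by
    simp only [r]; field_simp; ring
  rw [hbase, div_pow, le_div_iff₀ (by positivity)]
  exact hvol

theorem encard_le_of_isSeparated_sphere {ε : ℝ≥0} (hε : 0 < ε) {C : Set E}
    (hC : C ⊆ sphere 0 1) (hsep : IsSeparated ε C) :
    C.encard ≤ ⌊(1 + 2 / (ε : ℝ)) ^ finrank ℝ E⌋₊ := by
  by_contra! hlt
  obtain ⟨t, htC, ht⟩ := Set.exists_subset_encard_eq (Order.add_one_le_of_lt hlt)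
  have htfin : t.Finite := Set.finite_of_encard_eq_coe ht
  have hcard := card_le_of_isSeparated_sphere hε (C := htfin.toFinset)
    (by simpa using htC.trans hC) (by simpa using hsep.subset htC)
  rw [← Set.ncard_eq_toFinset_card t htfin, Set.ncard_def, ht] at hcard
  exact (Nat.lt_floor_add_one _).not_ge (by exact_mod_cast hcard)

theorem exists_finset_isCover_sphere {ε : ℝ≥0} (hε : 0 < ε) :
    ∃ N : Finset E, (N : Set E) ⊆ sphere 0 1 ∧ IsCover ε (sphere 0 1) (N : Set E) ∧
      (N.card : ℝ) ≤ (1 + 2 / ε) ^ finrank ℝ E := by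
  have hpack : packingNumber ε (sphere (0 : E) 1) ≠ ⊤ :=
    ne_top_of_le_ne_top (ENat.natCast_ne_top _) <| iSup_le fun C => iSup_le fun hC =>
      iSup_le fun hsep => encard_le_of_isSeparated_sphere hε hC hsep
  have hfin : (maximalSeparatedSet ε (sphere (0 : E) 1)).Finite := by
    rw [← Set.encard_ne_top_iff, encard_maximalSeparatedSet hpack]
    exact hpack
  refine ⟨hfin.toFinset, by simpa using maximalSeparatedSet_subset,
    by simpa using isCover_maximalSeparatedSet hpack,
    card_le_of_isSeparated_sphere hε (by simpa using maximalSeparatedSet_subset)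
      (by simpa using isSeparated_maximalSeparatedSet)⟩

end Nets

lemma Metric.IsCover.exists_norm_sub_le {E : Type*} [SeminormedAddCommGroup E] {ε : ℝ≥0}
    {s N : Set E} (hN : IsCover ε s N) {x : E} (hx : x ∈ s) : ∃ y ∈ N, ‖x - y‖ ≤ ε := by
  simpa [dist_eq_norm] using hN.subset_iUnion_closedBall hx

/-- For a unit `v`, take `u = T v / ‖T v‖`, so that `‖T v‖ = ⟪u, T v⟫`; moving `u` and `v` to
nearby net points changes `⟪u, T v⟫` by at most `ε ‖T‖` each. -/
theorem ContinuousLinearMap.opNorm_le_of_isCover_sphere {E F : Type*} [NormedAddCommGroup E]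
    [NormedSpace ℝ E] [NormedAddCommGroup F] [InnerProductSpace ℝ F] (T : E →L[ℝ] F)
    {ε : ℝ≥0} {M : Set F} {N : Set E} (hM : M ⊆ closedBall 0 1)
    (hMcov : IsCover ε (sphere 0 1) M) (hNcov : IsCover ε (sphere 0 1) N) {B : ℝ} (hB0 : 0 ≤ B)
    (hB : ∀ u ∈ M, ∀ v ∈ N, ⟪u, T v⟫ ≤ B) :
    (1 - 2 * ε) * ‖T‖ ≤ B := by
  suffices ‖T‖ ≤ B + 2 * ε * ‖T‖ by linarith
  refine T.opNorm_le_of_unit_norm (by positivity) fun v hv => ?_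
  obtain ⟨v₀, hv₀N, hvv₀⟩ := hNcov.exists_norm_sub_le (mem_sphere_zero_iff_norm.2 hv)
  rcases eq_or_ne (T v) 0 with h0 | h0
  · rw [h0, norm_zero]; positivity
  set u := ‖T v‖⁻¹ • T v
  obtain ⟨u₀, hu₀M, huu₀⟩ :=
    hMcov.exists_norm_sub_le (mem_sphere_zero_iff_norm.2 (norm_smul_inv_norm (𝕜 := ℝ) h0))
  have hu₀ : ‖u₀‖ ≤ 1 := mem_closedBall_zero_iff.1 (hM hu₀M)
  have hTv : ‖T v‖ ≤ ‖T‖ := by simpa [hv] using T.le_opNorm v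
  calc ‖T v‖ = ⟪u, T v⟫ := by
        rw [real_inner_smul_left, real_inner_self_eq_norm_sq]
        field_simp
    _ = ⟪u - u₀, T v⟫ + ⟪u₀, T (v - v₀)⟫ + ⟪u₀, T v₀⟫ := by
        rw [map_sub, inner_sub_left, inner_sub_right]; ring
    _ ≤ ε * ‖T‖ + 1 * (‖T‖ * ε) + B := by
        gcongr ?_ + ?_ + ?_
        · exact (real_inner_le_norm _ _).trans (mul_le_mul huu₀ hTv (norm_nonneg _) ε.2)
        · refine (real_inner_le_norm _ _).trans (mul_le_mul hu₀ ?_ (norm_nonneg _) zero_le_one)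
          exact (T.le_opNorm _).trans (mul_le_mul_of_nonneg_left hvv₀ (norm_nonneg _))
        · exact hB u₀ hu₀M v₀ hv₀N
    _ = B + 2 * ε * ‖T‖ := by ring

section DataMatrix

open scoped Matrix Matrix.Norms.L2Operator

variable {n d : ℕ}

lemma sum_outerProd_eq_transpose_mul (x : Fin n → EuclideanSpace ℝ (Fin d)) :
    ∑ i, outerProd (x i) = (Matrix.of fun i j => x i j)ᵀ * Matrix.of fun i j => x i j := by
  ext k l
  simp [outerProd, Matrix.sum_apply, Matrix.mul_apply]

lemma matOpNorm_smul_sum_outerProd (c : ℝ) (x : Fin n → EuclideanSpace ℝ (Fin d)) :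
    matOpNorm (c • ∑ i, outerProd (x i)) = |c| * ‖Matrix.of fun i j => x i j‖ ^ 2 := by
  rw [show matOpNorm (c • ∑ i, outerProd (x i)) = ‖c • ∑ i, outerProd (x i)‖ from rfl,
    norm_smul, sum_outerProd_eq_transpose_mul, ← Matrix.conjTranspose_eq_transpose_of_trivial,
    Matrix.l2_opNorm_conjTranspose_mul_self, Real.norm_eq_abs, sq]

lemma Matrix.inner_toEuclideanLin (A : Matrix (Fin n) (Fin d) ℝ) (u : EuclideanSpace ℝ (Fin n))
    (v : EuclideanSpace ℝ (Fin d)) :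
    ⟪u, Matrix.toEuclideanLin A v⟫ = ∑ i, u i * ∑ j, A i j * v j := by
  simp only [PiLp.inner_apply, RCLike.inner_apply, conj_trivial]
  exact Finset.sum_congr rfl fun i _ => mul_comm _ _

theorem matOpNorm_smul_sum_outerProd_le_of_isCover {x : Fin n → EuclideanSpace ℝ (Fin d)}
    {M : Set (EuclideanSpace ℝ (Fin n))} {N : Set (EuclideanSpace ℝ (Fin d))}
    (hM : M ⊆ closedBall 0 1) (hMcov : IsCover (1 / 4) (sphere 0 1) M)
    (hNcov : IsCover (1 / 4) (sphere 0 1) N) {c : ℝ} (hc : 0 ≤ c)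
    (hx : ∀ u ∈ M, ∀ v ∈ N, ∑ i, u i * ∑ j, x i j * v j ≤ c * √n) :
    matOpNorm ((n : ℝ)⁻¹ • ∑ i, outerProd (x i)) ≤ (2 * c) ^ 2 := by
  set X : Matrix (Fin n) (Fin d) ℝ := Matrix.of fun i j => x i j
  have hX : (1 - 2 * ((1 / 4 : ℝ≥0) : ℝ)) * ‖X‖ ≤ c * √n := by
    rw [Matrix.l2_opNorm_def]
    refine ContinuousLinearMap.opNorm_le_of_isCover_sphere _ hM hMcov hNcov (by positivity)
      fun u hu v hv => ?_
    rw [LinearEquiv.trans_apply, LinearMap.coe_toContinuousLinearMap', Matrix.inner_toEuclideanLin]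
    exact hx u hu v hv
  norm_num at hX
  calc matOpNorm ((n : ℝ)⁻¹ • ∑ i, outerProd (x i)) = (n : ℝ)⁻¹ * ‖X‖ ^ 2 := by
        rw [matOpNorm_smul_sum_outerProd, abs_of_nonneg (by positivity)]
    _ ≤ (n : ℝ)⁻¹ * (2 * c * √n) ^ 2 := by gcongr; linarith
    _ = (2 * c) ^ 2 * ((n : ℝ)⁻¹ * n) := by rw [mul_pow, sq_sqrt n.cast_nonneg]; ring
    _ ≤ (2 * c) ^ 2 :=
        mul_le_of_le_one_right (by positivity) (inv_mul_le_one_of_le₀ le_rfl n.cast_nonneg)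

end DataMatrix

lemma ProbabilityTheory.IndepFun.integral_comp_le_of_forall {Ω α β : Type*} [MeasurableSpace Ω]
    [MeasurableSpace α] [MeasurableSpace β] {P : Measure Ω} [IsProbabilityMeasure P]
    {A : Ω → α} {S : Ω → β} (hAS : IndepFun A S P) (hA : Measurable A) (hS : Measurable S)
    {G : α × β → ℝ} (hG : Measurable G) (hint : Integrable (fun ω => G (A ω, S ω)) P) {K : ℝ}
    (hK : ∀ a, ∫ ω, G (a, S ω) ∂P ≤ K) :
    ∫ ω, G (A ω, S ω) ∂P ≤ K := by
  have hlaw : P.map (fun ω => (A ω, S ω)) = (P.map A).prod (P.map S) :=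
    hAS.map_prod_eq_prod_map_map hA.aemeasurable hS.aemeasurable
  have hGint : Integrable G ((P.map A).prod (P.map S)) := by
    rw [← hlaw]
    exact (integrable_map_measure hG.aestronglyMeasurable (hA.prodMk hS).aemeasurable).2 hint
  have : IsProbabilityMeasure (P.map A) := Measure.isProbabilityMeasure_map hA.aemeasurable
  calc ∫ ω, G (A ω, S ω) ∂P = ∫ a, ∫ s, G (a, s) ∂(P.map S) ∂(P.map A) := by
        rw [← integral_prod G hGint, ← hlaw,
          integral_map (hA.prodMk hS).aemeasurable hG.aestronglyMeasurable]
    _ ≤ ∫ _, K ∂(P.map A) := by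
        refine integral_mono hGint.integral_prod_left (integrable_const K) fun a => ?_
        rw [integral_map (f := fun s => G (a, s)) hS.aemeasurable
          (hG.comp measurable_prodMk_left).aestronglyMeasurable]
        exact hK a
    _ = K := by simp

namespace IsSemiProduct

variable {Ω : Type*} [MeasurableSpace Ω] {P : Measure Ω} {d : ℕ} {α ρ : ℝ}
  {η : Ω → EuclideanSpace ℝ (Fin d)}

lemma measurable_coord (hη : IsSemiProduct P α ρ η) (j : Fin d) :
    Measurable fun ω => η ω j :=
  ((measurable_pi_apply j).comp (WithLp.measurable_ofLp 2 _)).comp hη.meas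

lemma integral_sign_eq_zero (hη : IsSemiProduct P α ρ η) (j : Fin d) :
    ∫ ω, Real.sign (η ω j) ∂P = 0 := by
  have h := ((hη.symm j).comp Real.measurable_sign).integral_eq
  simp only [Function.comp_def, Real.sign_neg, integral_neg] at h
  linarith

lemma hasSubgaussianMGF_sum_mul_sign [IsProbabilityMeasure P] (hη : IsSemiProduct P α ρ η)
    (c : Fin d → ℝ) :
    HasSubgaussianMGF (fun ω => ∑ j, c j * Real.sign (η ω j)) (∑ j, ‖c j‖₊ ^ 2) P := by
  refine HasSubgaussianMGF.sum_of_iIndepFun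
    (hη.iIndep_sign.comp (fun j x => c j * x) fun j => measurable_const_mul (c j))
    fun j _ => ?_
  show HasSubgaussianMGF (fun ω => c j * Real.sign (η ω j)) _ P
  have hbound : ∀ ω, c j * Real.sign (η ω j) ∈ Set.Icc (-|c j|) |c j| := fun ω => by
    rw [Set.mem_Icc, ← abs_le, abs_mul]
    rcases Real.sign_apply_eq (η ω j) with h1 | h1 | h1 <;> simp [h1]
  have hmean : ∫ ω, c j * Real.sign (η ω j) ∂P = 0 := by
    rw [integral_const_mul, hη.integral_sign_eq_zero, mul_zero]
  have hmeas : Measurable fun ω => c j * Real.sign (η ω j) :=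
    (Real.measurable_sign.comp (hη.measurable_coord j)).const_mul (c j)
  convert hasSubgaussianMGF_of_mem_Icc_of_integral_eq_zero hmeas.aemeasurable
    (ae_of_all _ hbound) hmean using 1
  rw [sub_neg_eq_add, ← two_mul, nnnorm_mul, nnnorm_abs, Real.nnnorm_two,
    mul_div_cancel_left₀ _ two_ne_zero]

lemma measurable_sum_clip_mul (hη : IsSemiProduct P α ρ η) (h : ℝ) (t : Fin d → ℝ) :
    Measurable fun ω => ∑ j, clip h (η ω j) * t j :=
  Finset.measurable_sum _ fun j _ =>
    ((measurable_clip h).comp (hη.measurable_coord j)).mul_const (t j)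

/-- Conditionally on `|η|`, the clipped coordinates are independent signs times constants of
size at most `|h|`; Hoeffding's lemma for the signs then integrates out over `|η|`. -/
lemma integral_exp_sum_clip_mul_le [IsProbabilityMeasure P] (hη : IsSemiProduct P α ρ η)
    (h : ℝ) (t : EuclideanSpace ℝ (Fin d)) :
    ∫ ω, exp (∑ j, clip h (η ω j) * t j) ∂P ≤ exp (‖t‖ ^ 2 * h ^ 2 / 2) := by
  set A : Ω → Fin d → ℝ := fun ω j => |η ω j|
  set S : Ω → Fin d → ℝ := fun ω j => Real.sign (η ω j)
  set G : (Fin d → ℝ) × (Fin d → ℝ) → ℝ := fun p => exp (∑ j, t j * min |p.1 j| h * p.2 j)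
  have hA : Measurable A := measurable_pi_lambda _ fun j => (hη.measurable_coord j).abs
  have hS : Measurable S :=
    measurable_pi_lambda _ fun j => Real.measurable_sign.comp (hη.measurable_coord j)
  have hGAS : ∀ ω, exp (∑ j, clip h (η ω j) * t j) = G (A ω, S ω) := fun ω => by
    simp only [G, A, S, abs_abs, clip_eq_sign_mul_min]
    exact congrArg exp (Finset.sum_congr rfl fun j _ => by ring)
  have hint : Integrable (fun ω => exp (∑ j, clip h (η ω j) * t j)) P := by
    simpa using integrable_exp_mul_of_mem_Icc (t := 1) (hη.measurable_sum_clip_mul h t).aemeasurable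
      (ae_of_all _ fun ω => abs_le.1 (abs_sum_clip_mul_le h _ t))
  have hsign : ∀ a : Fin d → ℝ, ∫ ω, G (a, S ω) ∂P ≤ exp (‖t‖ ^ 2 * h ^ 2 / 2) := fun a => by
    have hc := (hη.hasSubgaussianMGF_sum_mul_sign fun j => t j * min |a j| h).mgf_le 1
    simp only [mgf, one_mul, one_pow, mul_one] at hc
    refine hc.trans (exp_le_exp.2 ?_)
    push_cast
    rw [EuclideanSpace.norm_sq_eq, Finset.sum_mul]
    gcongr with j
    rw [norm_mul, mul_pow, ← sq_abs h]
    gcongr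
    exact abs_min_abs_le_abs _ _
  simp only [hGAS] at hint ⊢
  exact hη.indep_sign_abs.symm.integral_comp_le_of_forall hA hS (by fun_prop) hint hsign

lemma hasSubgaussianMGF_sum_clip_mul [IsProbabilityMeasure P] (hη : IsSemiProduct P α ρ η)
    (h : ℝ) (t : EuclideanSpace ℝ (Fin d)) :
    HasSubgaussianMGF (fun ω => ∑ j, clip h (η ω j) * t j) ((‖t‖₊ * ‖h‖₊) ^ 2) P where
  integrable_exp_mul _ := integrable_exp_mul_of_mem_Icc
    (hη.measurable_sum_clip_mul h t).aemeasurable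
    (ae_of_all _ fun ω => abs_le.1 (abs_sum_clip_mul_le h _ t))
  mgf_le s := by
    have hst : ∀ ω, s * ∑ j, clip h (η ω j) * t j = ∑ j, clip h (η ω j) * (s • t) j :=
      fun ω => by rw [Finset.mul_sum]; exact Finset.sum_congr rfl fun j _ => by simp; ring
    simp only [mgf, hst]
    refine (hη.integral_exp_sum_clip_mul_le h (s • t)).trans_eq ?_
    push_cast
    rw [norm_smul, Real.norm_eq_abs, Real.norm_eq_abs, mul_pow, mul_pow, sq_abs, sq_abs]
    ring_nf

end IsSemiProduct

lemma ProbabilityTheory.iIndepFun.hasSubgaussianMGF_sum_mul_sum_clip_mul {Ω : Type*}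
    [MeasurableSpace Ω] {P : Measure Ω} [IsProbabilityMeasure P] {n d : ℕ} {α ρ : ℝ}
    {η : Fin n → Ω → EuclideanSpace ℝ (Fin d)} (hind : iIndepFun η P)
    (hη : ∀ i, IsSemiProduct P α ρ (η i)) (h : ℝ) (u : EuclideanSpace ℝ (Fin n))
    (v : EuclideanSpace ℝ (Fin d)) :
    HasSubgaussianMGF (fun ω => ∑ i, u i * ∑ j, clip h (η i ω j) * v j)
      ((‖u‖₊ * ‖v‖₊ * ‖h‖₊) ^ 2) P := by
  have hrow : Measurable fun x : EuclideanSpace ℝ (Fin d) => ∑ j, clip h (x j) * v j :=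
    Finset.measurable_sum _ fun j _ => ((measurable_clip h).comp
      ((measurable_pi_apply j).comp (WithLp.measurable_ofLp 2 _))).mul_const (v j)
  have hrows : ∀ i, HasSubgaussianMGF (fun ω => u i * ∑ j, clip h (η i ω j) * v j)
      (‖u i‖₊ ^ 2 * (‖v‖₊ * ‖h‖₊) ^ 2) P := fun i => by
    convert ((hη i).hasSubgaussianMGF_sum_clip_mul h v).const_mul (u i) using 3
    congr 1
    ext
    simp only [NNReal.coe_pow, coe_nnnorm, Real.norm_eq_abs, sq_abs]
    rfl
  have hsum : HasSubgaussianMGF (fun ω => ∑ i, u i * ∑ j, clip h (η i ω j) * v j) _ P :=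
    HasSubgaussianMGF.sum_of_iIndepFun
      (hind.comp (fun i x => u i * ∑ j, clip h (x j) * v j) fun i => hrow.const_mul (u i))
      (s := Finset.univ) (fun i _ => hrows i)
  convert hsum using 1
  rw [← Finset.sum_mul, mul_assoc, mul_pow, EuclideanSpace.nnnorm_eq, NNReal.sq_sqrt]

lemma ProbabilityTheory.iIndepFun.measure_sum_mul_sum_clip_mul_ge_le {Ω : Type*}
    [MeasurableSpace Ω] {P : Measure Ω} [IsProbabilityMeasure P] {n d : ℕ} {α ρ : ℝ}
    {η : Fin n → Ω → EuclideanSpace ℝ (Fin d)} (hind : iIndepFun η P)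
    (hη : ∀ i, IsSemiProduct P α ρ (η i)) (h : ℝ) {u : EuclideanSpace ℝ (Fin n)}
    {v : EuclideanSpace ℝ (Fin d)} (hu : ‖u‖ = 1) (hv : ‖v‖ = 1) {ε : ℝ} (hε : 0 ≤ ε) :
    P {ω | ε ≤ ∑ i, u i * ∑ j, clip h (η i ω j) * v j} ≤
      ENNReal.ofReal (exp (-ε ^ 2 / (2 * h ^ 2))) := by
  rw [← ofReal_measureReal]
  refine ENNReal.ofReal_le_ofReal
    (((hind.hasSubgaussianMGF_sum_mul_sum_clip_mul hη h u v).measure_ge_le hε).trans_eq ?_)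
  push_cast
  rw [hu, hv, Real.norm_eq_abs, one_mul, one_mul, sq_abs]

lemma MeasureTheory.measure_biUnion_finset_prod_le {Ω ι κ : Type*} [MeasurableSpace Ω]
    {P : Measure Ω} {M : Finset ι} {N : Finset κ} {s : ι → κ → Set Ω} {c : ℝ≥0∞}
    (h : ∀ u ∈ M, ∀ v ∈ N, P (s u v) ≤ c) :
    P (⋃ u ∈ M, ⋃ v ∈ N, s u v) ≤ M.card * N.card * c :=
  calc P (⋃ u ∈ M, ⋃ v ∈ N, s u v) ≤ ∑ u ∈ M, ∑ v ∈ N, P (s u v) :=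
        (measure_biUnion_finset_le _ _).trans
          (Finset.sum_le_sum fun u _ => measure_biUnion_finset_le _ _)
    _ ≤ ∑ u ∈ M, ∑ v ∈ N, c :=
        Finset.sum_le_sum fun u hu => Finset.sum_le_sum fun v hv => h u hu v hv
    _ = M.card * N.card * c := by simp [mul_assoc]

lemma MeasureTheory.ofReal_one_sub_le_measure_of_compl_subset {Ω : Type*} [MeasurableSpace Ω]
    {P : Measure Ω} [IsProbabilityMeasure P] {s t : Set Ω} {δ : ℝ} (hδ : 0 ≤ δ)
    (hst : sᶜ ⊆ t) (hs : P s ≤ ENNReal.ofReal δ) : ENNReal.ofReal (1 - δ) ≤ P t := by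
  rw [ENNReal.ofReal_sub _ hδ, ENNReal.ofReal_one, tsub_le_iff_left]
  calc 1 = P Set.univ := measure_univ.symm
    _ ≤ P s + P sᶜ := measure_univ_le_add_compl s
    _ ≤ ENNReal.ofReal δ + P t := add_le_add hs (measure_mono hst)

lemma nine_pow_mul_nine_pow_mul_exp_le {d n : ℕ} {δ : ℝ} (hδ : δ ∈ Set.Ioc 0 1)
    (hn : (d : ℝ) + log (1 / δ) ≤ n) : (9 : ℝ) ^ n * 9 ^ d * exp (-(8 * n)) ≤ δ := by
  have hlog : 0 ≤ log (1 / δ) := log_nonneg (one_le_one_div hδ.1 hδ.2)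
  have hdn : d ≤ n := by exact_mod_cast (show (d : ℝ) ≤ n by linarith)
  have h81 : (81 : ℝ) ≤ exp 7 := by
    have h2 : (2 : ℝ) ≤ exp 1 := by linarith [add_one_le_exp (1 : ℝ)]
    calc (81 : ℝ) ≤ 2 ^ 7 := by norm_num
      _ ≤ exp 1 ^ 7 := by gcongr
      _ = exp 7 := by rw [← exp_nat_mul]; norm_num
  calc (9 : ℝ) ^ n * 9 ^ d * exp (-(8 * n)) ≤ 9 ^ n * 9 ^ n * exp (-(8 * n)) := by
        gcongr
        norm_num
    _ = 81 ^ n * exp (-(8 * n)) := by rw [← mul_pow]; norm_num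
    _ ≤ exp 7 ^ n * exp (-(8 * n)) := by gcongr
    _ = exp (-n) := by rw [← exp_nat_mul, ← exp_add]; ring_nf
    _ ≤ δ := by
        rw [one_div, log_inv] at hn
        rw [← exp_log hδ.1]
        gcongr
        linarith [(Nat.cast_nonneg d : (0 : ℝ) ≤ d)]

/-- operator-norm bound on the empirical covariance of the
clipped semi-product noise. -/
theorem clipped_covariance_semiProduct :
    ∃ C : ℝ, 0 < C ∧
      ∀ (d n : ℕ) (Ω : Type) (_ : MeasurableSpace Ω) (P : Measure Ω),
        IsProbabilityMeasure P →
      ∀ (α ρ δ : ℝ), 0 < α → 0 < ρ → δ ∈ Set.Ioo (0 : ℝ) 1 →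
        (d : ℝ) + Real.log (1 / δ) ≤ n →
      ∀ η : Fin n → Ω → EuclideanSpace ℝ (Fin d),
        IsIIDSemiProduct P α ρ η →
        ENNReal.ofReal (1 - δ) ≤
          P {ω | matOpNorm ((n : ℝ)⁻¹ • ∑ i, outerProd (clipVec (2 * ρ) (η i ω))) ≤
            C * ρ ^ 2} := by
  refine ⟨256, by norm_num, ?_⟩
  rintro d n Ω _ P _ α ρ δ - hρ hδ hn η ⟨hind, hη, -⟩
  obtain ⟨M, hMsph, hMcov, hMcard⟩ :=
    exists_finset_isCover_sphere (E := EuclideanSpace ℝ (Fin n)) (ε := 1 / 4) (by norm_num)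
  obtain ⟨N, hNsph, hNcov, hNcard⟩ :=
    exists_finset_isCover_sphere (E := EuclideanSpace ℝ (Fin d)) (ε := 1 / 4) (by norm_num)
  simp only [finrank_euclideanSpace_fin, show 1 + 2 / ((1 / 4 : ℝ≥0) : ℝ) = 9 by norm_num]
    at hMcard hNcard
  set S := fun (u : EuclideanSpace ℝ (Fin n)) (v : EuclideanSpace ℝ (Fin d)) ω =>
    ∑ i, u i * ∑ j, clip (2 * ρ) (η i ω j) * v j
  have htail : ∀ u ∈ M, ∀ v ∈ N,
      P {ω | 8 * ρ * √n ≤ S u v ω} ≤ ENNReal.ofReal (exp (-(8 * n))) := fun u hu v hv => by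
    convert hind.measure_sum_mul_sum_clip_mul_ge_le hη (2 * ρ)
      (mem_sphere_zero_iff_norm.1 (hMsph hu)) (mem_sphere_zero_iff_norm.1 (hNsph hv))
      (ε := 8 * ρ * √n) (by positivity) using 4
    field_simp
    rw [sq_sqrt n.cast_nonneg]
    ring
  have hbad : P (⋃ u ∈ M, ⋃ v ∈ N, {ω | 8 * ρ * √n ≤ S u v ω}) ≤ ENNReal.ofReal δ := by
    refine (measure_biUnion_finset_prod_le htail).trans ?_
    rw [← ENNReal.ofReal_natCast, ← ENNReal.ofReal_natCast, ← ENNReal.ofReal_mul (by positivity),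
      ← ENNReal.ofReal_mul (by positivity)]
    refine ENNReal.ofReal_le_ofReal
      (le_trans ?_ (nine_pow_mul_nine_pow_mul_exp_le (Set.Ioo_subset_Ioc_self hδ) hn))
    gcongr
  refine ofReal_one_sub_le_measure_of_compl_subset hδ.1.le (fun ω hω => ?_) hbad
  simp only [Set.mem_compl_iff, Set.mem_iUnion, Set.mem_ofPred_eq, not_exists, not_le] at hω
  refine (matOpNorm_smul_sum_outerProd_le_of_isCover (hMsph.trans sphere_subset_closedBall)
    hMcov hNcov (by positivity) fun u hu v hv => (hω u hu v hv).le).trans_eq ?_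
  ring

end
end

section
/- There exist absolute constants c, C > 0 such that the following holds. Let d ≥ 100, ρ > 0, α ∈ (0,1), ε > 0 with ε ≤ c·α, and μ* ∈ ℝ^d. Let Σ be a d×d positive semidefinite matrix with Tr(Σ) = d, and let η*_1, …, η*_n be i.i.d. copies of R·Σ^{1/2}·U, where U is uniformly distributed on the unit sphere of ℝ^d and R is a positive random variable independent of U with P(R ≤ ρ·√d) ≥ α. Let F(x) = Φ_h(‖x‖) with h = 20·ρ·√d. Then with probability at least 1 − exp(−c·α·n) over the samples: for every ε-corruption y_1, …, y_n of μ* + η*_1, …, μ* + η*_n, every w ∈ W_{2ε}, and every u ∈ ℝ^d with ‖u‖ ≤ ρ·√d, one has L^w(μ* + u) − L^w(μ*) − ⟨∇L^w(μ*), u⟩ ≥ (α/4)·‖u‖². -/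
open MeasureTheory ProbabilityTheory Real
open scoped BigOperators ENNReal NNReal Classical

noncomputable section

/-!
The Bregman divergence of `x ↦ Φ_h(‖x‖)` is nonnegative, and it equals `‖u‖² / 2` whenever both
endpoints lie in the ball of radius `h`, where `Φ_h(‖·‖)` is quadratic. With `r = ρ√d` and
`h = 20 r`, every uncorrupted sample with `‖η_i‖ ≤ 19 r` therefore contributes `w_i ‖u‖² / 2`, and
it suffices that these samples carry total weight at least `α / 2`.

Invariance of the uniform distribution under coordinate swaps and sign flips gives
`E[U Uᵀ] = I / d`, hence `E ‖Σ^{1/2} U‖² = Tr Σ / d = 1`, and Chebyshev gives `‖Σ^{1/2} U‖ ≤ 19`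
with probability at least `360/361`. So each `‖η_i‖ ≤ 19 r` with probability at least
`(360/361) α`, and a Chernoff bound shows that more than `0.53 α n` of the samples do, except with
probability `exp(-α n / 100)`. Discarding the at most `ε n` corrupted samples and the reweighting
budget `2ε` leaves weight at least `0.53 α - 3ε ≥ α / 2`.
-/

open scoped RealInnerProductSpace

section Huber

variable {d : ℕ} {h : ℝ}

lemma huber_of_le {t : ℝ} (ht : 0 ≤ t) (hth : t ≤ h) : huber h t = t ^ 2 / 2 := by
  simp [huber, abs_of_nonneg ht, hth]

lemma huber_of_lt {t : ℝ} (ht : 0 ≤ t) (hth : h < t) : huber h t = h * t - h ^ 2 / 2 := by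
  simp [huber, abs_of_nonneg ht, not_le.mpr hth]

/-- For `t ≥ 0`, `Φ_h(t) = sup_{s ≤ h} (s t - s² / 2)`, attained at `s = min t h`. -/
lemma mul_sub_sq_div_two_le_huber {s t : ℝ} (hsh : s ≤ h) (ht : 0 ≤ t) :
    s * t - s ^ 2 / 2 ≤ huber h t := by
  rcases le_or_gt t h with hth | hth
  · rw [huber_of_le ht hth]; nlinarith [sq_nonneg (t - s)]
  · rw [huber_of_lt ht hth]; nlinarith [mul_nonneg (sub_nonneg.mpr hsh) (sub_nonneg.mpr hth.le)]

lemma inner_sub_norm_sq_div_two_le_huber {z : EuclideanSpace ℝ (Fin d)} (hz : ‖z‖ ≤ h)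
    (x : EuclideanSpace ℝ (Fin d)) :
    ⟪z, x⟫ - ‖z‖ ^ 2 / 2 ≤ huber h ‖x‖ := by
  have := mul_sub_sq_div_two_le_huber hz (norm_nonneg x)
  linarith [real_inner_le_norm z x]

lemma ballProj_of_norm_le {x : EuclideanSpace ℝ (Fin d)} (hx : ‖x‖ ≤ h) : ballProj h x = x :=
  if_pos hx

lemma norm_ballProj_le (hh : 0 ≤ h) (x : EuclideanSpace ℝ (Fin d)) : ‖ballProj h x‖ ≤ h := by
  unfold ballProj
  split_ifs with hx
  · exact hx
  · have hx0 : 0 < ‖x‖ := hh.trans_lt (not_le.mp hx)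
    rw [norm_smul, Real.norm_of_nonneg (div_nonneg hh hx0.le), div_mul_cancel₀ _ hx0.ne']

/-- The supremum in `inner_sub_norm_sq_div_two_le_huber` is attained at `z = ballProj h x`. -/
lemma huber_norm_eq (hh : 0 ≤ h) (x : EuclideanSpace ℝ (Fin d)) :
    huber h ‖x‖ = ⟪ballProj h x, x⟫ - ‖ballProj h x‖ ^ 2 / 2 := by
  unfold ballProj
  split_ifs with hx
  · rw [huber_of_le (norm_nonneg x) hx, real_inner_self_eq_norm_sq]; ring
  · have hxh : h < ‖x‖ := not_le.mp hx
    have hx0 : 0 < ‖x‖ := hh.trans_lt hxh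
    rw [huber_of_lt (norm_nonneg x) hxh, real_inner_smul_left, real_inner_self_eq_norm_sq,
      norm_smul, Real.norm_of_nonneg (div_nonneg hh hx0.le), div_mul_cancel₀ _ hx0.ne']
    field_simp

def huberBregman (h : ℝ) (a u : EuclideanSpace ℝ (Fin d)) : ℝ :=
  huber h ‖a + u‖ - huber h ‖a‖ - ⟪ballProj h a, u⟫

lemma huberBregman_nonneg (hh : 0 ≤ h) (a u : EuclideanSpace ℝ (Fin d)) :
    0 ≤ huberBregman h a u := by
  have := inner_sub_norm_sq_div_two_le_huber (norm_ballProj_le hh a) (a + u)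
  rw [inner_add_right] at this
  rw [huberBregman, huber_norm_eq hh a]
  linarith

lemma huberBregman_of_norm_le {a u : EuclideanSpace ℝ (Fin d)} (ha : ‖a‖ ≤ h)
    (hau : ‖a + u‖ ≤ h) : huberBregman h a u = ‖u‖ ^ 2 / 2 := by
  rw [huberBregman, ballProj_of_norm_le ha, huber_of_le (norm_nonneg _) hau,
    huber_of_le (norm_nonneg _) ha, norm_add_sq_real]
  ring

end Huber

section Deterministic

variable {d n : ℕ}

lemma wLoss_sub_sub_inner_eq_sum_huberBregman (h : ℝ) (y : Fin n → EuclideanSpace ℝ (Fin d))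
    (w : Fin n → ℝ) (μ u : EuclideanSpace ℝ (Fin d)) :
    wLoss (fun x => huber h ‖x‖) y w (μ + u) - wLoss (fun x => huber h ‖x‖) y w μ -
        ⟪∑ i, w i • ballProj h (μ - y i), u⟫ = ∑ i, w i * huberBregman h (μ - y i) u := by
  simp only [wLoss, sum_inner, real_inner_smul_left, ← Finset.sum_sub_distrib, huberBregman,
    add_sub_right_comm μ u]
  exact Finset.sum_congr rfl fun i _ => by ring

lemma card_div_sub_le_sum_of_mem_weightSet {ε : ℝ} {w : Fin n → ℝ} (hw : w ∈ weightSet n ε)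
    (G : Finset (Fin n)) : (G.card : ℝ) / n - ε ≤ ∑ i ∈ G, w i := by
  have hdev : ∑ i ∈ G, |w i - 1 / n| ≤ ε :=
    (Finset.sum_le_sum_of_subset_of_nonneg G.subset_univ fun i _ _ => abs_nonneg _).trans hw.2
  have hpt : ∑ i ∈ G, (1 / (n : ℝ) - |w i - 1 / n|) ≤ ∑ i ∈ G, w i :=
    Finset.sum_le_sum fun i _ => by linarith [neg_abs_le (w i - 1 / n)]
  rw [Finset.sum_sub_distrib, Finset.sum_const, nsmul_eq_mul] at hpt
  linarith [show (G.card : ℝ) * (1 / n) = G.card / n by ring]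

lemma IsCorruption.card_filter_ne_le {E : Type*} {ε : ℝ} {ystar y : Fin n → E}
    (hy : IsCorruption ε ystar y) :
    ((Finset.univ.filter fun i => y i ≠ ystar i).card : ℝ) ≤ ε * n := by
  rw [IsCorruption, Set.ncard_eq_toFinset_card', Set.toFinset_ofPred] at hy
  exact hy

/-- On the uncorrupted samples with `‖η i‖ ≤ h - r` both `μ - y i` and `μ - y i + u` stay in the
quadratic region of `Φ_h`; these samples carry weight at least `κ`. -/
theorem mul_norm_sq_le_wLoss_sub_sub_inner {h r ε κ : ℝ} (hh : 0 ≤ h)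
    {μ u : EuclideanSpace ℝ (Fin d)} (hu : ‖u‖ ≤ r) {η y : Fin n → EuclideanSpace ℝ (Fin d)}
    (hy : IsCorruption ε (fun i => μ + η i) y) {w : Fin n → ℝ} (hw : w ∈ weightSet n (2 * ε))
    (hgood : (κ + 3 * ε) * n <
      (Finset.univ.filter fun i => η i ∈ Metric.closedBall 0 (h - r)).card) :
    κ / 2 * ‖u‖ ^ 2 ≤ wLoss (fun x => huber h ‖x‖) y w (μ + u) -
      wLoss (fun x => huber h ‖x‖) y w μ - ⟪∑ i, w i • ballProj h (μ - y i), u⟫ := by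
  set good := Finset.univ.filter fun i => η i ∈ Metric.closedBall 0 (h - r)
  set bad := Finset.univ.filter fun i => y i ≠ μ + η i
  have hn : 0 < (n : ℝ) := by
    rcases n.eq_zero_or_pos with rfl | hn
    · simp [good, Finset.univ_eq_empty] at hgood
    · exact_mod_cast hn
  have hquad : ∀ i ∈ good \ bad, huberBregman h (μ - y i) u = ‖u‖ ^ 2 / 2 := by
    intro i hi
    simp only [good, bad, Finset.mem_sdiff, Finset.mem_filter, Finset.mem_univ, true_and,
      not_not, mem_closedBall_zero_iff] at hi
    have hyi : μ - y i = -η i := by rw [hi.2]; abel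
    refine huberBregman_of_norm_le ?_ ?_ <;> rw [hyi]
    · linarith [norm_neg (η i), norm_nonneg u]
    · linarith [norm_add_le (-η i) u, norm_neg (η i)]
  have hcard : (κ + 2 * ε) * n < (good \ bad).card := by
    have hsplit : (good.card : ℝ) ≤ (good \ bad).card + bad.card := by
      exact_mod_cast Finset.card_le_card_sdiff_add_card
    have hbad : (bad.card : ℝ) ≤ ε * n := by convert hy.card_filter_ne_le
    linarith
  have hweight : κ ≤ ∑ i ∈ good \ bad, w i := by
    have := card_div_sub_le_sum_of_mem_weightSet hw (good \ bad)
    have : κ + 2 * ε < (good \ bad).card / n := by rwa [lt_div_iff₀ hn]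
    linarith
  rw [wLoss_sub_sub_inner_eq_sum_huberBregman]
  calc κ / 2 * ‖u‖ ^ 2 ≤ (∑ i ∈ good \ bad, w i) * (‖u‖ ^ 2 / 2) := by nlinarith [sq_nonneg ‖u‖]
    _ = ∑ i ∈ good \ bad, w i * huberBregman h (μ - y i) u := by
      rw [Finset.sum_mul]; exact Finset.sum_congr rfl fun i hi => by rw [hquad i hi]
    _ ≤ ∑ i, w i * huberBregman h (μ - y i) u :=
      Finset.sum_le_sum_of_subset_of_nonneg (Finset.subset_univ _) fun i _ _ =>
        mul_nonneg (hw.1 i).1 (huberBregman_nonneg hh _ u)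

end Deterministic

section MatrixSqrt

variable {ι : Type*} [Fintype ι] [DecidableEq ι]

lemma Matrix.PosSemidef.cfc_sqrt_mul_self {S : Matrix ι ι ℝ} (hS : S.PosSemidef) :
    cfc Real.sqrt S * cfc Real.sqrt S = S := by
  rw [← cfc_mul Real.sqrt Real.sqrt S]
  conv_rhs => rw [← cfc_id' ℝ S hS.1]
  refine cfc_congr fun x hx => ?_
  rw [hS.1.spectrum_real_eq_range_eigenvalues] at hx
  obtain ⟨i, rfl⟩ := hx
  exact Real.mul_self_sqrt (hS.eigenvalues_nonneg i)

lemma Matrix.PosSemidef.sum_sq_cfc_sqrt {S : Matrix ι ι ℝ} (hS : S.PosSemidef) :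
    ∑ j, ∑ k, cfc Real.sqrt S j k ^ 2 = S.trace := by
  have hsymm : (cfc Real.sqrt S).conjTranspose = cfc Real.sqrt S := IsSelfAdjoint.cfc
  conv_rhs => rw [← hS.cfc_sqrt_mul_self]
  simp only [Matrix.trace, Matrix.diag, Matrix.mul_apply, sq]
  refine Finset.sum_congr rfl fun j _ => Finset.sum_congr rfl fun k _ => ?_
  rw [← hsymm, Matrix.conjTranspose_apply, star_trivial, hsymm]

end MatrixSqrt

lemma Matrix.norm_toEuclideanLin_apply_sq {d : ℕ} (A : Matrix (Fin d) (Fin d) ℝ)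
    (u : EuclideanSpace ℝ (Fin d)) :
    ‖Matrix.toEuclideanLin A u‖ ^ 2 = ∑ j, ∑ k, ∑ l, A j k * A j l * (u k * u l) := by
  rw [EuclideanSpace.real_norm_sq_eq]
  refine Finset.sum_congr rfl fun j _ => ?_
  change (∑ k, A j k * u k) ^ 2 = _
  rw [sq, Finset.sum_mul_sum]
  exact Finset.sum_congr rfl fun k _ => Finset.sum_congr rfl fun l _ => by ring

namespace IsUniformOnSphere

variable {d : ℕ} {ν : Measure (EuclideanSpace ℝ (Fin d))}

lemma ae_norm_eq_one (hν : IsUniformOnSphere ν) : ∀ᵐ u ∂ν, ‖u‖ = 1 := by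
  have := hν.1
  have hsph : ∀ᵐ u ∂ν, u ∈ Metric.sphere (0 : EuclideanSpace ℝ (Fin d)) 1 :=
    (mem_ae_iff_prob_eq_one Metric.isClosed_sphere.measurableSet).mpr hν.2.1
  filter_upwards [hsph] with u hu using mem_sphere_zero_iff_norm.mp hu

lemma integrable_coord_mul_coord (hν : IsUniformOnSphere ν) (k l : Fin d) :
    Integrable (fun u : EuclideanSpace ℝ (Fin d) => u k * u l) ν := by
  have := hν.1
  refine Integrable.mono' (integrable_const 1) (by fun_prop) ?_
  filter_upwards [hν.ae_norm_eq_one] with u hu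
  rw [norm_mul, ← one_mul 1]
  exact mul_le_mul (hu ▸ PiLp.norm_apply_le u k) (hu ▸ PiLp.norm_apply_le u l)
    (norm_nonneg _) zero_le_one

lemma integral_comp_linearIsometryEquiv (hν : IsUniformOnSphere ν)
    (O : EuclideanSpace ℝ (Fin d) ≃ₗᵢ[ℝ] EuclideanSpace ℝ (Fin d))
    (f : EuclideanSpace ℝ (Fin d) → ℝ) : ∫ u, f (O u) ∂ν = ∫ u, f u ∂ν := by
  conv_rhs => rw [← hν.2.2 O]
  exact (integral_map_equiv O.toHomeomorph.toMeasurableEquiv f).symm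

/-- Flipping the sign of the `k`-th coordinate preserves `ν`. -/
lemma integral_coord_mul_coord_of_ne (hν : IsUniformOnSphere ν) {k l : Fin d} (hkl : k ≠ l) :
    ∫ u, u k * u l ∂ν = 0 := by
  let O : EuclideanSpace ℝ (Fin d) ≃ₗᵢ[ℝ] EuclideanSpace ℝ (Fin d) :=
    LinearIsometryEquiv.piLpCongrRight 2
      fun j => if j = k then LinearIsometryEquiv.neg ℝ else LinearIsometryEquiv.refl ℝ ℝ
  have hflip : ∀ u, O u k * O u l = -(u k * u l) := fun u => by simp [O, hkl.symm]
  have := hν.integral_comp_linearIsometryEquiv O fun u => u k * u l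
  simp only [hflip, integral_neg] at this
  linarith

/-- Swapping two coordinates preserves `ν`, and the diagonal moments sum to `E ‖u‖² = 1`. -/
lemma integral_coord_mul_self (hν : IsUniformOnSphere ν) (k : Fin d) :
    ∫ u, u k * u k ∂ν = 1 / d := by
  have := hν.1
  have hswap : ∀ j, ∫ u, u j * u j ∂ν = ∫ u, u k * u k ∂ν := fun j => by
    rw [← hν.integral_comp_linearIsometryEquiv
      (LinearIsometryEquiv.piLpCongrLeft 2 ℝ ℝ (Equiv.swap j k))]
    simp [Equiv.piCongrLeft']
  have hsum : ∑ j, ∫ u, u j * u j ∂ν = 1 := by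
    rw [← integral_finsetSum _ fun j _ => hν.integrable_coord_mul_coord j j]
    rw [integral_congr_ae (g := fun _ => (1 : ℝ)), integral_const, probReal_univ, one_smul]
    filter_upwards [hν.ae_norm_eq_one] with u hu
    simpa [← sq, hu] using (EuclideanSpace.real_norm_sq_eq u).symm
  simp only [hswap, Finset.sum_const, Finset.card_univ, Fintype.card_fin, nsmul_eq_mul] at hsum
  rw [eq_div_iff (by rintro hd; simp [hd] at hsum)]
  linarith

lemma integral_coord_mul_coord (hν : IsUniformOnSphere ν) (k l : Fin d) :
    ∫ u, u k * u l ∂ν = if k = l then (1 / d : ℝ) else 0 := by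
  split_ifs with hkl
  · subst hkl; exact hν.integral_coord_mul_self k
  · exact hν.integral_coord_mul_coord_of_ne hkl

lemma integrable_norm_toEuclideanLin_sq (hν : IsUniformOnSphere ν) (A : Matrix (Fin d) (Fin d) ℝ) :
    Integrable (fun u => ‖Matrix.toEuclideanLin A u‖ ^ 2) ν := by
  simp only [Matrix.norm_toEuclideanLin_apply_sq]
  exact integrable_finsetSum _ fun j _ => integrable_finsetSum _ fun k _ =>
    integrable_finsetSum _ fun l _ => (hν.integrable_coord_mul_coord k l).const_mul _

lemma integral_norm_toEuclideanLin_sq (hν : IsUniformOnSphere ν) (A : Matrix (Fin d) (Fin d) ℝ) :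
    ∫ u, ‖Matrix.toEuclideanLin A u‖ ^ 2 ∂ν = (∑ j, ∑ k, A j k ^ 2) / d := by
  have hint := hν.integrable_coord_mul_coord
  have hentry : ∀ j k, ∫ u, ∑ l, A j k * A j l * (u k * u l) ∂ν = A j k ^ 2 / d := by
    intro j k
    rw [integral_finsetSum _ fun l _ => (hint k l).const_mul _]
    simp [integral_const_mul, hν.integral_coord_mul_coord, sq, div_eq_mul_inv]
  have hrow : ∀ j, ∫ u, ∑ k, ∑ l, A j k * A j l * (u k * u l) ∂ν = (∑ k, A j k ^ 2) / d := by
    intro j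
    rw [integral_finsetSum _ fun k _ => integrable_finsetSum _ fun l _ => (hint k l).const_mul _,
      Finset.sum_div]
    exact Finset.sum_congr rfl fun k _ => hentry j k
  simp only [Matrix.norm_toEuclideanLin_apply_sq]
  rw [integral_finsetSum _ fun j _ => integrable_finsetSum _ fun k _ =>
    integrable_finsetSum _ fun l _ => (hint k l).const_mul _, Finset.sum_div]
  exact Finset.sum_congr rfl fun j _ => hrow j

lemma sq_mul_measureReal_le_norm_toEuclideanLin_le (hν : IsUniformOnSphere ν)
    (A : Matrix (Fin d) (Fin d) ℝ) {t : ℝ} (ht : 0 ≤ t) :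
    t ^ 2 * ν.real {u | t ≤ ‖Matrix.toEuclideanLin A u‖} ≤ (∑ j, ∑ k, A j k ^ 2) / d := by
  have hsq : {u | t ≤ ‖Matrix.toEuclideanLin A u‖} =
      {u | t ^ 2 ≤ ‖Matrix.toEuclideanLin A u‖ ^ 2} := by
    ext u
    exact (pow_le_pow_iff_left₀ ht (norm_nonneg _) two_ne_zero).symm
  rw [hsq, ← hν.integral_norm_toEuclideanLin_sq]
  exact mul_meas_ge_le_integral_of_nonneg (ae_of_all _ fun u => sq_nonneg _)
    (hν.integrable_norm_toEuclideanLin_sq A) _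

lemma one_sub_inv_sq_le_measureReal_norm_sqrt_le (hν : IsUniformOnSphere ν)
    {S : Matrix (Fin d) (Fin d) ℝ} (hS : S.PosSemidef) (htr : S.trace = d) {t : ℝ} (ht : 0 < t) :
    1 - (t ^ 2)⁻¹ ≤ ν.real {u | ‖Matrix.toEuclideanLin (cfc Real.sqrt S) u‖ ≤ t} := by
  have := hν.1
  have hcheb := hν.sq_mul_measureReal_le_norm_toEuclideanLin_le (cfc Real.sqrt S) ht.le
  rw [hS.sum_sq_cfc_sqrt, htr] at hcheb
  have hsub : {u | t ≤ ‖Matrix.toEuclideanLin (cfc Real.sqrt S) u‖}ᶜ ⊆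
      {u | ‖Matrix.toEuclideanLin (cfc Real.sqrt S) u‖ ≤ t} := fun _ hu =>
    (not_le.mp (by simpa using hu)).le
  have hcompl := probReal_add_probReal_compl (μ := ν)
    (measurableSet_le measurable_const (by fun_prop) :
      MeasurableSet {u | t ≤ ‖Matrix.toEuclideanLin (cfc Real.sqrt S) u‖})
  have hmono := measureReal_mono (μ := ν) hsub
  have hle : ν.real {u | t ≤ ‖Matrix.toEuclideanLin (cfc Real.sqrt S) u‖} ≤ (t ^ 2)⁻¹ := by
    rw [← one_div, le_div_iff₀ (by positivity), mul_comm]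
    exact hcheb.trans (div_self_le_one _)
  linarith

end IsUniformOnSphere

section Chernoff

variable {Ω E : Type*} [MeasurableSpace Ω] [MeasurableSpace E] {P : Measure Ω}
  [IsProbabilityMeasure P] {s : Set E}

/-- An indicator takes only the values `0` and `1`, on which `x ↦ exp (-x)` is affine. -/
lemma mgf_indicator_neg_one_le {ξ : Ω → E} (hξ : AEMeasurable ξ P) (hs : MeasurableSet s) :
    mgf (fun ω => s.indicator 1 (ξ ω)) P (-1) ≤ exp (-((1 - exp (-1)) * P.real (ξ ⁻¹' s))) := by
  have haffine : ∀ ω,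
      exp (-1 * s.indicator 1 (ξ ω)) = 1 - (1 - exp (-1)) * s.indicator 1 (ξ ω) := by
    intro ω
    by_cases hω : ξ ω ∈ s
    · simp [Set.indicator_of_mem hω]
    · simp [Set.indicator_of_notMem hω]
  have hmean : ∫ ω, s.indicator 1 (ξ ω) ∂P = P.real (ξ ⁻¹' s) := by
    change ∫ ω, (ξ ⁻¹' s).indicator 1 ω ∂P = _
    rw [integral_indicator₀ (hξ.nullMeasurable hs)]
    simp
  have hX : AEMeasurable (fun ω => s.indicator (1 : E → ℝ) (ξ ω)) P :=
    (measurable_one.indicator hs).comp_aemeasurable hξ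
  have hint : Integrable (fun ω => s.indicator (1 : E → ℝ) (ξ ω)) P :=
    .mono' (integrable_const 1) hX.aestronglyMeasurable
      (ae_of_all _ fun ω => (norm_indicator_le_norm_self _ _).trans (by simp))
  rw [mgf, integral_congr_ae (ae_of_all _ haffine), integral_sub (integrable_const _)
    (hint.const_mul _), integral_const_mul, hmean]
  simp only [probReal_univ, integral_const, smul_eq_mul, one_mul]
  linarith [add_one_le_exp (-((1 - exp (-1)) * P.real (ξ ⁻¹' s)))]

/-- Chernoff's bound with `t = -1`. -/
theorem measureReal_card_filter_mem_le_le_exp {ι : Type*} [Fintype ι] {ξ : ι → Ω → E}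
    (hind : iIndepFun ξ P) (hξ : ∀ i, AEMeasurable (ξ i) P) (hs : MeasurableSet s) {p : ℝ}
    (hp : ∀ i, p ≤ P.real (ξ i ⁻¹' s)) (β : ℝ) :
    P.real {ω | ((Finset.univ.filter fun i => ξ i ω ∈ s).card : ℝ) ≤ β} ≤
      exp (β - (1 - exp (-1)) * p * Fintype.card ι) := by
  set X : ι → Ω → ℝ := fun i ω => s.indicator 1 (ξ i ω)
  have hX : ∀ i, AEMeasurable (X i) P := fun i =>
    (measurable_one.indicator hs).comp_aemeasurable (hξ i)
  have hcount : ∀ ω, ((Finset.univ.filter fun i => ξ i ω ∈ s).card : ℝ) = (∑ i, X i) ω := by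
    intro ω
    simp [X, Finset.sum_apply, Set.indicator_apply, Finset.sum_boole]
  have hint : Integrable (fun ω => exp (-1 * (∑ i, X i) ω)) P := by
    refine .mono' (integrable_const 1)
      ((Finset.aemeasurable_sum _ fun i _ => hX i).const_mul _).exp.aestronglyMeasurable
      (ae_of_all _ fun ω => ?_)
    rw [Real.norm_of_nonneg (exp_pos _).le, exp_le_one_iff, ← hcount]
    linarith [(Finset.univ.filter fun i => ξ i ω ∈ s).card.cast_nonneg (α := ℝ)]
  have hmgf : mgf (∑ i, X i) P (-1) ≤ exp (-((1 - exp (-1)) * p * Fintype.card ι)) := by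
    have hindX : iIndepFun X P := hind.comp _ fun _ => measurable_one.indicator hs
    rw [hindX.mgf_sum₀ hX]
    calc ∏ i, mgf (X i) P (-1) ≤ ∏ _i : ι, exp (-((1 - exp (-1)) * p)) :=
          Finset.prod_le_prod (fun _ _ => mgf_nonneg) fun i _ =>
            (mgf_indicator_neg_one_le (hξ i) hs).trans <| exp_le_exp.mpr <|
              neg_le_neg <| mul_le_mul_of_nonneg_left (hp i) <|
                sub_nonneg.mpr (exp_le_one_iff.mpr (by norm_num))
      _ = exp (-((1 - exp (-1)) * p * Fintype.card ι)) := by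
          rw [Finset.prod_const, ← exp_nat_mul, Finset.card_univ]; ring_nf
  simp only [hcount]
  calc P.real {ω | (∑ i, X i) ω ≤ β} ≤ exp (-(-1) * β) * mgf (∑ i, X i) P (-1) :=
        measure_le_le_exp_mul_mgf β (by norm_num) hint
    _ ≤ exp β * exp (-((1 - exp (-1)) * p * Fintype.card ι)) := by
        rw [neg_neg, one_mul]; gcongr
    _ = exp (β - (1 - exp (-1)) * p * Fintype.card ι) := by rw [← exp_add]; ring_nf

end Chernoff

lemma ofReal_one_sub_le_measure_compl {Ω : Type*} [MeasurableSpace Ω] {P : Measure Ω}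
    [IsProbabilityMeasure P] {T : Set Ω} {x : ℝ} (hT : P.real T ≤ x) :
    ENNReal.ofReal (1 - x) ≤ P Tᶜ := by
  have := measureReal_union_le (μ := P) T Tᶜ
  rw [Set.union_compl_self, probReal_univ] at this
  exact ENNReal.ofReal_le_of_le_toReal (by rw [← measureReal_def]; linarith)

lemma mul_le_measure_norm_ellSample_le {Ω : Type*} [MeasurableSpace Ω] {P : Measure Ω} {d : ℕ}
    (A : Matrix (Fin d) (Fin d) ℝ) {R : Ω → ℝ} {U : Ω → EuclideanSpace ℝ (Fin d)}
    (hR : ∀ ω, 0 ≤ R ω) (hRU : IndepFun R U P) (r t : ℝ) :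
    P {ω | R ω ≤ r} * P (U ⁻¹' {u | ‖Matrix.toEuclideanLin A u‖ ≤ t}) ≤
      P {ω | ‖ellSample A R U ω‖ ≤ r * t} := by
  change P (R ⁻¹' Set.Iic r) * _ ≤ _
  rw [← hRU.measure_inter_preimage_eq_mul _ _ measurableSet_Iic
    (measurableSet_le (by fun_prop) measurable_const)]
  refine measure_mono fun ω ⟨hRr, hUt⟩ => ?_
  simp only [Set.mem_preimage, Set.mem_Iic] at hRr hUt
  change ‖R ω • _‖ ≤ r * t
  rw [norm_smul, Real.norm_of_nonneg (hR ω)]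
  exact mul_le_mul hRr hUt (norm_nonneg _) ((hR ω).trans hRr)

lemma mul_le_measureReal_ellSample_sqrt_mem_closedBall {Ω : Type*} [MeasurableSpace Ω]
    {P : Measure Ω} [IsFiniteMeasure P] {d : ℕ} {S : Matrix (Fin d) (Fin d) ℝ} (hS : S.PosSemidef)
    (htr : S.trace = d) {R : Ω → ℝ} {U : Ω → EuclideanSpace ℝ (Fin d)} (hR : ∀ ω, 0 ≤ R ω)
    (hU : IsUniformOnSphere (P.map U)) (hRU : IndepFun R U P) {a r : ℝ} (ha : 0 ≤ a)
    (hRa : ENNReal.ofReal a ≤ P {ω | R ω ≤ r}) :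
    360 / 361 * a ≤ P.real (ellSample (cfc Real.sqrt S) R U ⁻¹' Metric.closedBall 0 (r * 19)) := by
  have hUae : AEMeasurable U P := by
    by_contra hU'
    have := hU.1
    exact IsProbabilityMeasure.ne_zero _ (Measure.map_of_not_aemeasurable hU')
  have hdir : ENNReal.ofReal (360 / 361) ≤
      P (U ⁻¹' {u | ‖Matrix.toEuclideanLin (cfc Real.sqrt S) u‖ ≤ 19}) := by
    have := hU.one_sub_inv_sq_le_measureReal_norm_sqrt_le hS htr (t := 19) (by norm_num)
    rw [map_measureReal_apply_of_aemeasurable hUae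
      (measurableSet_le (by fun_prop) measurable_const)] at this
    norm_num at this
    exact ENNReal.ofReal_le_of_le_toReal this
  have hball : ellSample (cfc Real.sqrt S) R U ⁻¹' Metric.closedBall 0 (r * 19) =
      {ω | ‖ellSample (cfc Real.sqrt S) R U ω‖ ≤ r * 19} := by
    ext ω; simp
  rw [measureReal_def, ← ENNReal.ofReal_le_iff_le_toReal (measure_ne_top _ _), hball, mul_comm,
    ENNReal.ofReal_mul ha]
  exact (mul_le_mul' hRa hdir).trans (mul_le_measure_norm_ellSample_le _ hR hRU r 19)

/-- local strong convexity of the radial Huber loss for elliptical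
distributions. -/
theorem local_strong_convexity_elliptical :
    ∃ c C : ℝ, 0 < c ∧ 0 < C ∧
      ∀ (d n : ℕ), 100 ≤ d →
      ∀ (Ω : Type) (_ : MeasurableSpace Ω) (P : Measure Ω), IsProbabilityMeasure P →
      ∀ (ρ α ε : ℝ), 0 < ρ → α ∈ Set.Ioo (0 : ℝ) 1 → 0 < ε → ε ≤ c * α →
      ∀ μstar : EuclideanSpace ℝ (Fin d),
      ∀ (S : Matrix (Fin d) (Fin d) ℝ) (hS : S.PosSemidef), S.trace = d →
      ∀ (R : Ω → ℝ) (U : Ω → EuclideanSpace ℝ (Fin d)),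
        (∀ ω, 0 < R ω) →
        IsUniformOnSphere (Measure.map U P) →
        IndepFun R U P →
        ENNReal.ofReal α ≤ P {ω | R ω ≤ ρ * Real.sqrt d} →
      ∀ η : Fin n → Ω → EuclideanSpace ℝ (Fin d),
        iIndepFun η P →
        (∀ i, IdentDistrib (η i) (ellSample ((hS.1.eigenvectorUnitary : Matrix (Fin d) (Fin d) ℝ) *
          Matrix.diagonal ((↑) ∘ (√·) ∘ hS.1.eigenvalues) *
          (star hS.1.eigenvectorUnitary : Matrix (Fin d) (Fin d) ℝ)) R U) P P) →
        ENNReal.ofReal (1 - Real.exp (-(c * α * n))) ≤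
          P {ω | ∀ y : Fin n → EuclideanSpace ℝ (Fin d),
            IsCorruption ε (fun i => μstar + η i ω) y →
            ∀ w ∈ weightSet n (2 * ε),
            ∀ u : EuclideanSpace ℝ (Fin d), ‖u‖ ≤ ρ * Real.sqrt d →
              α / 4 * ‖u‖ ^ 2 ≤
                wLoss (fun x => huber (20 * ρ * Real.sqrt d) ‖x‖) y w (μstar + u) -
                  wLoss (fun x => huber (20 * ρ * Real.sqrt d) ‖x‖) y w μstar -
                  (inner ℝ (∑ i, w i • ballProj (20 * ρ * Real.sqrt d) (μstar - y i)) u : ℝ)} := by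
  refine ⟨1 / 100, 1, by norm_num, one_pos, ?_⟩
  intro d n _ Ω _ P _ ρ α ε hρ hα _ hεα μstar S hS htr R U hRpos hU hRU hRα η hind hident
  have hsqrt : (hS.1.eigenvectorUnitary : Matrix (Fin d) (Fin d) ℝ) *
      Matrix.diagonal ((↑) ∘ (√·) ∘ hS.1.eigenvalues) *
      (star hS.1.eigenvectorUnitary : Matrix (Fin d) (Fin d) ℝ) = cfc Real.sqrt S := by
    rw [hS.1.cfc_eq]; rfl
  simp only [hsqrt] at hident
  set r := ρ * √d
  have hsample : ∀ i, 360 / 361 * α ≤ P.real (η i ⁻¹' Metric.closedBall 0 (r * 19)) := fun i => by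
    rw [measureReal_def, (hident i).measure_mem_eq measurableSet_closedBall, ← measureReal_def]
    exact mul_le_measureReal_ellSample_sqrt_mem_closedBall hS htr (fun ω => (hRpos ω).le) hU hRU
      hα.1.le hRα
  have hchernoff := measureReal_card_filter_mem_le_le_exp hind
    (fun i => (hident i).aemeasurable_fst) measurableSet_closedBall hsample (53 / 100 * α * n)
  have hexp : 53 / 100 * α * n - (1 - exp (-1)) * (360 / 361 * α) * Fintype.card (Fin n) ≤
      -(1 / 100 * α * n) := by
    rw [Fintype.card_fin]
    nlinarith [exp_neg_one_lt_d9, mul_nonneg hα.1.le n.cast_nonneg]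
  refine (ofReal_one_sub_le_measure_compl (hchernoff.trans (exp_le_exp.mpr hexp))).trans
    (measure_mono fun ω hω y hy w hw u hu => ?_)
  have hgood : (α / 2 + 3 * ε) * n < (Finset.univ.filter fun i =>
      η i ω ∈ Metric.closedBall 0 (20 * ρ * √d - ρ * √d)).card := by
    rw [Set.mem_compl_iff, Set.notMem_ofPred_iff, not_le] at hω
    rw [show 20 * ρ * √d - ρ * √d = r * 19 by ring]
    nlinarith [mul_nonneg hα.1.le n.cast_nonneg, n.cast_nonneg (α := ℝ)]
  have := mul_norm_sq_le_wLoss_sub_sub_inner (by positivity) hu hy hw hgood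
  linarith [show α / 4 * ‖u‖ ^ 2 = α / 2 / 2 * ‖u‖ ^ 2 by ring]
end
end
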